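/- arXiv:1206.6364 — 4 statements merged into one kernel-verified Lean document; each statement's English description precedes it below -/
import Mathlib

section
/- For x ∈ ℂ with |x| < 1/e, the series W₀(x) = Σ_{n=1}^{∞} ((−n)^{n−1}/n!)·xⁿ converges absolutely, and its sum satisfies the Lambert W equation W₀(x)·e^{W₀(x)} = x. -/
/-!
Write `c n = (-(n + 1)) ^ n / (n + 1)!` and `g x = ∑ c n x ^ (n + 1)`. Since
`(n + 1) ^ n / (n + 1)! ≤ e ^ (n + 1)`, the series converges absolutely for `‖x‖ < 1 / e`, and
`g` is analytic on that disc.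

Substituting `x = w e ^ w` and expanding each `e ^ ((n + 1) w)` gives an absolutely convergent
double series in `w` whose coefficient of `w ^ (m + 1)` is
`(m + 1)!⁻¹ ∑_{k = 1}^{m + 1} (-1) ^ (k - 1) C(m + 1, k) k ^ m`. For `m ≥ 1` the vanishing
term `k = 0` may be added, and up to sign the sum becomes the `(m + 1)`-st forward difference
at `0` of `k ↦ k ^ m`, which is `0`; so `g (w e ^ w) = w` for small `w`. Because `w ↦ w e ^ w` has
derivative `1` at `0`, it maps neighbourhoods of `0` onto neighbourhoods of `0`, so
`g x e ^ (g x) = x` near `0` as well, and the identity theorem spreads this over the whole disc.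
-/

open Finset Filter Topology FormalMultilinearSeries

theorem sum_range_neg_one_pow_mul_choose_mul_pow_eq_zero {R : Type*} [CommRing R] {j n : ℕ}
    (h : j < n) : ∑ k ∈ range (n + 1), (-1 : R) ^ k * n.choose k * (k : R) ^ j = 0 := by
  have hΔ := congr_fun (fwdDiff_iter_pow_eq_zero_of_lt (R := R) h) 0
  rw [fwdDiff_iter_eq_sum_shift] at hΔ
  calc ∑ k ∈ range (n + 1), (-1 : R) ^ k * n.choose k * (k : R) ^ j
      = (-1) ^ n * ∑ k ∈ range (n + 1),
          ((-1 : ℤ) ^ (n - k) * n.choose k) • ((0 : R) + k • (1 : R)) ^ j := by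
        rw [mul_sum]
        refine sum_congr rfl fun k hk => ?_
        obtain ⟨i, rfl⟩ := Nat.exists_eq_add_of_le (mem_range_succ_iff.mp hk)
        have hsq : ((-1 : R) ^ i) ^ 2 = 1 := by rw [← pow_mul, pow_mul', neg_one_sq, one_pow]
        simp only [Nat.add_sub_cancel_left, zero_add, nsmul_eq_mul, mul_one, zsmul_eq_mul]
        push_cast
        linear_combination -(-1 : R) ^ k * ((k + i).choose k) * (k : R) ^ j * hsq
    _ = 0 := by rw [hΔ, Pi.zero_apply, mul_zero]

theorem HasSum.sum_antidiagonal {A α : Type*} [AddCommMonoid A] [HasAntidiagonal A]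
    [AddCommMonoid α] [TopologicalSpace α] [ContinuousAdd α] [RegularSpace α]
    {f : A × A → α} {a : α} (hf : HasSum f a) :
    HasSum (fun n => ∑ p ∈ antidiagonal n, f p) a :=
  (HasAntidiagonal.sigmaAntidiagonalEquivProd.hasSum_iff.mpr hf).sigma fun n => by
    have h := hasSum_fintype fun p : antidiagonal n => f p
    rwa [sum_coe_sort] at h

theorem hasSum_mul_exp_pow_succ {𝕜 : Type*} [RCLike 𝕜] (n : ℕ) (w : 𝕜) :
    HasSum (fun k : ℕ => ((n : 𝕜) + 1) ^ k / k.factorial * w ^ (n + 1 + k))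
      ((w * NormedSpace.exp w) ^ (n + 1)) := by
  have h := (NormedSpace.expSeries_div_hasSum_exp (((n : 𝕜) + 1) * w)).mul_left (w ^ (n + 1))
  have hexp : NormedSpace.exp (((n : 𝕜) + 1) * w) = NormedSpace.exp w ^ (n + 1) := by
    rw [← NormedSpace.exp_nsmul, nsmul_eq_mul]; push_cast; rfl
  have hterm (k : ℕ) : w ^ (n + 1) * ((((n : 𝕜) + 1) * w) ^ k / k.factorial)
      = ((n : 𝕜) + 1) ^ k / k.factorial * w ^ (n + 1 + k) := by rw [mul_pow]; ring
  rwa [hexp, ← mul_pow, funext hterm] at h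

noncomputable def lambertCoeff (n : ℕ) : ℂ := (-((n : ℂ) + 1)) ^ n / (n + 1).factorial

theorem norm_lambertCoeff (n : ℕ) :
    ‖lambertCoeff n‖ = ((n : ℝ) + 1) ^ n / (n + 1).factorial := by
  rw [lambertCoeff, norm_div, norm_pow, norm_neg]
  norm_cast

theorem norm_lambertCoeff_le (n : ℕ) : ‖lambertCoeff n‖ ≤ Real.exp 1 ^ (n + 1) :=
  calc ‖lambertCoeff n‖ ≤ ((n : ℝ) + 1) ^ (n + 1) / (n + 1).factorial := by
        rw [norm_lambertCoeff]
        gcongr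
        · linarith [n.cast_nonneg (α := ℝ)]
        · omega
    _ ≤ Real.exp ((n : ℝ) + 1) := Real.pow_div_factorial_le_exp _ (by positivity) _
    _ = Real.exp 1 ^ (n + 1) := by rw [← Real.exp_nat_mul]; push_cast; ring_nf

theorem summable_norm_lambertCoeff_mul_pow {r : ℝ} (hr₀ : 0 ≤ r) (hr : r < 1 / Real.exp 1) :
    Summable fun n => ‖lambertCoeff n‖ * r ^ n := by
  have her : Real.exp 1 * r < 1 := by rwa [lt_div_iff₀ (Real.exp_pos 1), mul_comm] at hr
  refine .of_nonneg_of_le (fun n => by positivity) (fun n => ?_)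
    ((summable_geometric_of_lt_one (by positivity) her).mul_left (Real.exp 1))
  calc ‖lambertCoeff n‖ * r ^ n ≤ Real.exp 1 ^ (n + 1) * r ^ n := by
        gcongr; exact norm_lambertCoeff_le n
    _ = Real.exp 1 * (Real.exp 1 * r) ^ n := by ring

theorem summable_norm_lambertCoeff_mul_pow_succ {r : ℝ} (hr₀ : 0 ≤ r)
    (hr : r < 1 / Real.exp 1) : Summable fun n => ‖lambertCoeff n‖ * r ^ (n + 1) := by
  simpa only [pow_succ, ← mul_assoc] using
    (summable_norm_lambertCoeff_mul_pow hr₀ hr).mul_right r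

theorem le_radius_ofScalars_lambertCoeff :
    ENNReal.ofReal (1 / Real.exp 1) ≤ (ofScalars ℂ lambertCoeff).radius := by
  refine ENNReal.le_of_forall_nnreal_lt fun r hr => ?_
  refine le_radius_of_summable_norm _ ?_
  simp only [ofScalars_norm]
  refine summable_norm_lambertCoeff_mul_pow r.coe_nonneg ?_
  rwa [← ENNReal.ofReal_coe_nnreal, ENNReal.ofReal_lt_ofReal_iff (by positivity)] at hr

theorem lambertCoeff_mul_pow_div_factorial (i j : ℕ) :
    lambertCoeff i * ((i : ℂ) + 1) ^ j / j.factorial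
      = (-1) ^ i * ((i + 1 + j).choose (i + 1) : ℂ) * ((i : ℂ) + 1) ^ (i + j)
        / (i + 1 + j).factorial := by
  have hC : ((i + 1 + j).choose (i + 1) : ℂ) * (i + 1).factorial * j.factorial
      = (i + 1 + j).factorial := by
    have h := Nat.choose_mul_factorial_mul_factorial (Nat.le_add_right (i + 1) j)
    rw [Nat.add_sub_cancel_left] at h
    exact_mod_cast h
  have hC₀ : ((i + 1 + j).choose (i + 1) : ℂ) ≠ 0 := by
    exact_mod_cast (Nat.choose_pos (Nat.le_add_right (i + 1) j)).ne'
  rw [← hC, lambertCoeff]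
  field_simp
  rw [neg_pow, pow_add]
  ring

theorem sum_antidiagonal_lambertCoeff (m : ℕ) :
    ∑ p ∈ antidiagonal m, lambertCoeff p.1 * ((p.1 : ℂ) + 1) ^ p.2 / p.2.factorial
      = if m = 0 then 1 else 0 := by
  cases m with
  | zero => simp [lambertCoeff]
  | succ m =>
    have hΔ := sum_range_neg_one_pow_mul_choose_mul_pow_eq_zero (R := ℂ) (lt_add_one (m + 1))
    have hrange := Nat.sum_antidiagonal_eq_sum_range_succ_mk (fun p : ℕ × ℕ =>
      (-1 : ℂ) ^ p.1 * ((m + 2).choose p.1 : ℂ) * (p.1 : ℂ) ^ (m + 1)) (m + 2)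
    replace hΔ := hrange.trans hΔ
    rw [Nat.sum_antidiagonal_succ] at hΔ
    dsimp only at hΔ
    rw [Nat.cast_zero, zero_pow (Nat.succ_ne_zero m), mul_zero, zero_add] at hΔ
    rw [if_neg (Nat.succ_ne_zero m)]
    calc ∑ p ∈ antidiagonal (m + 1), lambertCoeff p.1 * ((p.1 : ℂ) + 1) ^ p.2 / p.2.factorial
        = ∑ p ∈ antidiagonal (m + 1), -((m + 2).factorial : ℂ)⁻¹ * ((-1) ^ (p.1 + 1)
            * ((m + 2).choose (p.1 + 1) : ℂ) * ((p.1 + 1 : ℕ) : ℂ) ^ (m + 1)) := by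
          refine sum_congr rfl fun ⟨i, j⟩ hij => ?_
          rw [HasAntidiagonal.mem_antidiagonal] at hij
          rw [lambertCoeff_mul_pow_div_factorial, show m + 2 = i + 1 + j by omega,
            show m + 1 = i + j by omega]
          push_cast
          ring
      _ = 0 := by rw [← mul_sum, hΔ, mul_zero]

noncomputable def lambertSeries (x : ℂ) : ℂ := ∑' n, lambertCoeff n * x ^ (n + 1)

theorem lambertSeries_eq_mul_ofScalarsSum (x : ℂ) :
    lambertSeries x = x * ofScalarsSum lambertCoeff x := by
  rw [lambertSeries, ofScalars_sum_eq, ← tsum_mul_left]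
  congr with n
  rw [smul_eq_mul, pow_succ]
  ring

theorem analyticOnNhd_lambertSeries :
    AnalyticOnNhd ℂ lambertSeries (Metric.ball 0 (1 / Real.exp 1)) := by
  have hball : Metric.ball (0 : ℂ) (1 / Real.exp 1)
      ⊆ Metric.eball 0 (ofScalars ℂ lambertCoeff).radius := by
    rw [← Metric.eball_ofReal]
    exact Metric.eball_subset_eball le_radius_ofScalars_lambertCoeff
  have hrad : 0 < (ofScalars ℂ lambertCoeff).radius :=
    lt_of_lt_of_le (by simp [Real.exp_pos]) le_radius_ofScalars_lambertCoeff
  rw [show lambertSeries = fun x => x * ofScalarsSum lambertCoeff x from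
    funext lambertSeries_eq_mul_ofScalarsSum]
  exact analyticOnNhd_id.mul
    (((ofScalars ℂ lambertCoeff).hasFPowerSeriesOnBall hrad).analyticOnNhd.mono hball)

theorem hasSum_lambertCoeff_mul_pow_mul_exp_self {w : ℂ}
    (hw : ‖w‖ * Real.exp ‖w‖ < 1 / Real.exp 1) :
    HasSum (fun n => lambertCoeff n * (w * Complex.exp w) ^ (n + 1)) w := by
  set F : ℕ × ℕ → ℂ := fun p =>
    lambertCoeff p.1 * (((p.1 : ℂ) + 1) ^ p.2 / p.2.factorial * w ^ (p.1 + 1 + p.2))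
  have hrow (n : ℕ) :
      HasSum (fun k => F (n, k)) (lambertCoeff n * (w * Complex.exp w) ^ (n + 1)) := by
    have h := (hasSum_mul_exp_pow_succ n w).mul_left (lambertCoeff n)
    rwa [← Complex.exp_eq_exp_ℂ] at h
  have hnorm_row (n : ℕ) : HasSum (fun k => ‖F (n, k)‖)
      (‖lambertCoeff n‖ * (‖w‖ * Real.exp ‖w‖) ^ (n + 1)) := by
    have hterm (k : ℕ) : ‖F (n, k)‖
        = ‖lambertCoeff n‖ * (((n : ℝ) + 1) ^ k / k.factorial * ‖w‖ ^ (n + 1 + k)) := by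
      simp only [F, norm_mul, norm_div, norm_pow, Complex.norm_natCast]
      norm_cast
    have h := (hasSum_mul_exp_pow_succ n ‖w‖).mul_left ‖lambertCoeff n‖
    rwa [← Real.exp_eq_exp_ℝ, ← funext hterm] at h
  have hF : Summable F := by
    refine Summable.of_norm ((summable_prod_of_nonneg fun _ => norm_nonneg _).mpr
      ⟨fun n => (hnorm_row n).summable, ?_⟩)
    simp only [fun n => (hnorm_row n).tsum_eq]
    exact summable_norm_lambertCoeff_mul_pow_succ (by positivity) hw
  have hdiag : HasSum (fun m => if m = 0 then w else 0) (∑' p, F p) := by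
    convert hF.hasSum.sum_antidiagonal using 2 with m
    have hpow : ∀ p ∈ antidiagonal m, F p
        = lambertCoeff p.1 * ((p.1 : ℂ) + 1) ^ p.2 / p.2.factorial * w ^ (m + 1) := by
      intro p hp
      rw [← HasAntidiagonal.mem_antidiagonal.mp hp]
      simp only [F]
      ring
    rw [sum_congr rfl hpow, ← sum_mul, sum_antidiagonal_lambertCoeff]
    split_ifs with hm <;> simp [hm]
  have h := hF.hasSum.prod_fiberwise hrow
  rwa [hdiag.unique (hasSum_ite_eq 0 w)] at h

theorem HasStrictDerivAt.eventually_rightInverse_of_leftInverse {𝕜 : Type*}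
    [NontriviallyNormedField 𝕜] [CompleteSpace 𝕜] {f g : 𝕜 → 𝕜} {f' a : 𝕜}
    (hf : HasStrictDerivAt f f' a) (hf' : f' ≠ 0) (hgf : ∀ᶠ w in 𝓝 a, g (f w) = w) :
    ∀ᶠ x in 𝓝 (f a), f (g x) = x := by
  rw [← hf.map_nhds_eq hf', eventually_map]
  exact hgf.mono fun w hw => by rw [hw]

theorem eventually_lambertSeries_mul_exp_self :
    ∀ᶠ w in 𝓝 (0 : ℂ), lambertSeries (w * Complex.exp w) = w := by
  have hcont : Continuous fun w : ℂ => ‖w‖ * Real.exp ‖w‖ := by fun_prop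
  have hsmall : ∀ᶠ w in 𝓝 (0 : ℂ), ‖w‖ * Real.exp ‖w‖ < 1 / Real.exp 1 :=
    hcont.continuousAt.eventually_lt continuousAt_const (by simp [Real.exp_pos])
  exact hsmall.mono fun w hw => (hasSum_lambertCoeff_mul_pow_mul_exp_self hw).tsum_eq

theorem lambertSeries_mul_exp_lambertSeries {x : ℂ} (hx : ‖x‖ < 1 / Real.exp 1) :
    lambertSeries x * Complex.exp (lambertSeries x) = x := by
  have hf : HasStrictDerivAt (fun w => w * Complex.exp w) 1 0 := by
    simpa using (hasStrictDerivAt_id (0 : ℂ)).fun_mul (Complex.hasStrictDerivAt_exp 0)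
  have hnear := hf.eventually_rightInverse_of_leftInverse one_ne_zero
    eventually_lambertSeries_mul_exp_self
  rw [zero_mul] at hnear
  have hanalytic : AnalyticOnNhd ℂ (fun x => lambertSeries x * Complex.exp (lambertSeries x))
      (Metric.ball 0 (1 / Real.exp 1)) :=
    analyticOnNhd_lambertSeries.mul analyticOnNhd_lambertSeries.cexp
  exact hanalytic.eqOn_of_preconnected_of_eventuallyEq analyticOnNhd_id
    (convex_ball 0 _).isPreconnected (Metric.mem_ball_self (by positivity)) hnear
    (mem_ball_zero_iff.mpr hx)

/-- For `x ∈ ℂ` with `|x| < 1/e`, the series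
`W₀(x) = Σ_{n=1}^{∞} ((−n)^{n−1}/n!)·xⁿ` converges absolutely, and its sum
satisfies the Lambert W equation `W₀(x)·e^{W₀(x)} = x`.
(The series is reindexed so that the summation index `n : ℕ` corresponds to the
term of the original series with index `n + 1`.) -/
theorem lambertW_principal_series
    (x : ℂ) (hx : ‖x‖ < 1 / Real.exp 1)
    (W : ℂ)
    (hW : W = ∑' n : ℕ,
      ((-((n : ℂ) + 1)) ^ n / (n + 1).factorial) * x ^ (n + 1)) :
    (Summable fun n : ℕ =>
      ‖((-((n : ℂ) + 1)) ^ n / (n + 1).factorial) * x ^ (n + 1)‖) ∧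
    W * Complex.exp W = x := by
  subst hW
  refine ⟨?_, lambertSeries_mul_exp_lambertSeries hx⟩
  simpa only [norm_mul, norm_pow, lambertCoeff] using
    summable_norm_lambertCoeff_mul_pow_succ (norm_nonneg x) hx
end

section
/- Let τ > 0 be real, β₂, γ₂ ∈ ℂ with γ₂ ≠ 0, and let L ∈ ℂ with e^{L} = γ₂ (a branch of the logarithm of γ₂) and L ≠ 0. Define σ = 1/L, c = (β₂/γ₂)·exp( ((τ−1)/τ)·(L + Log τ + Log(1/L)) ), and μ = (Log τ + Log(1/L))/L − c, where Log denotes the principal branch of the complex logarithm. Then a complex number v satisfies e^{−v} + c·e^{−v/τ} − σv − 1 − c − μ = 0 if and only if λ := (L + Log τ + Log(1/L) + v)/τ satisfies λ·e^{λτ} = β₂·e^{(τ−1)λ} + γ₂. -/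
/-- Let `τ > 0`, `γ₂ ≠ 0`, and `L` a nonzero branch of the
logarithm of `γ₂` (`e^L = γ₂`). With `σ = 1/L`,
`c = (β₂/γ₂)·exp(((τ−1)/τ)·(L + Log τ + Log(1/L)))`, and
`μ = (Log τ + Log(1/L))/L − c` (Log the principal branch), a complex `v`
satisfies `e^{−v} + c·e^{−v/τ} − σv − 1 − c − μ = 0` iff
`λ := (L + Log τ + Log(1/L) + v)/τ` satisfies `λ·e^{λτ} = β₂·e^{(τ−1)λ} + γ₂`. -/
theorem two_lag_f_root_iff_lambda_char
    (τ : ℝ) (hτ : 0 < τ) (β₂ γ₂ : ℂ) (hγ₂ : γ₂ ≠ 0)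
    (L : ℂ) (hL : Complex.exp L = γ₂) (hL0 : L ≠ 0)
    (σ c μ : ℂ)
    (hσ : σ = 1 / L)
    (hc : c = (β₂ / γ₂) *
      Complex.exp ((((τ : ℂ) - 1) / τ) * (L + Complex.log τ + Complex.log (1 / L))))
    (hμ : μ = (Complex.log τ + Complex.log (1 / L)) / L - c)
    (v lam : ℂ)
    (hlam : lam = (L + Complex.log τ + Complex.log (1 / L) + v) / τ) :
    Complex.exp (-v) + c * Complex.exp (-v / τ) - σ * v - 1 - c - μ = 0 ↔
      lam * Complex.exp (lam * τ) = β₂ * Complex.exp (((τ : ℂ) - 1) * lam) + γ₂ := by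
  have hτ0 : (τ : ℂ) ≠ 0 := by exact_mod_cast hτ.ne'
  have h1 : lam * τ = L + Complex.log τ + Complex.log (1 / L) + v := by
    rw [hlam]; field_simp
  have h2 : ((τ : ℂ) - 1) * lam =
      (((τ : ℂ) - 1) / τ) * (L + Complex.log τ + Complex.log (1 / L)) + (v + (-v / τ)) := by
    rw [hlam]; field_simp; ring
  have e1 : Complex.exp (lam * τ) = γ₂ * τ * (1 / L) * Complex.exp v := by
    rw [h1, Complex.exp_add, Complex.exp_add, Complex.exp_add, hL,
      Complex.exp_log hτ0, Complex.exp_log (one_div_ne_zero hL0)]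
  have e2 : Complex.exp (((τ : ℂ) - 1) * lam) =
      Complex.exp ((((τ : ℂ) - 1) / τ) * (L + Complex.log τ + Complex.log (1 / L)))
        * (Complex.exp v * Complex.exp (-v / τ)) := by
    rw [h2, Complex.exp_add, Complex.exp_add]
  have hev : Complex.exp v ≠ 0 := Complex.exp_ne_zero v
  have key : (β₂ * Complex.exp (((τ : ℂ) - 1) * lam) + γ₂) - lam * Complex.exp (lam * τ)
      = γ₂ * Complex.exp v *
        (Complex.exp (-v) + c * Complex.exp (-v / τ) - σ * v - 1 - c - μ) := by
    rw [e1, e2, hlam, hσ, hμ, hc]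
    set E := Complex.exp ((((τ : ℂ) - 1) / τ) * (L + Complex.log τ + Complex.log (1 / L))) with hE
    set w := Complex.exp v with hw
    set s := Complex.exp (-v / τ) with hs
    set x := Complex.exp (-v) with hx
    have hxw : w * x = 1 := by rw [hw, hx, ← Complex.exp_add]; simp
    have hti : (τ : ℂ) * (τ : ℂ)⁻¹ = 1 := mul_inv_cancel₀ hτ0
    have hLi : L * L⁻¹ = 1 := mul_inv_cancel₀ hL0
    have hgi : γ₂ * γ₂⁻¹ = 1 := mul_inv_cancel₀ hγ₂
    linear_combination (-(β₂ * E * w * s)) * hgi + (-γ₂) * hxw +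
      (-(γ₂ * w * L⁻¹ * (L + Complex.log τ + Complex.log (1 / L) + v))) * hti +
      (-(γ₂ * w)) * hLi
  constructor
  · intro h
    have hk := key
    rw [h, mul_zero] at hk
    exact (sub_eq_zero.mp hk).symm
  · intro h
    have hk := key
    rw [h, sub_self] at hk
    rcases mul_eq_zero.mp hk.symm with h0 | h0
    · exact absurd h0 (mul_ne_zero hγ₂ hev)
    · exact h0
end

section
/- Let τ > 0 be real, α₁, β₁, γ₁ ∈ ℂ with γ₂ := γ₁·e^{−α₁τ} ≠ 0, and let L ∈ ℂ with e^{L} = γ₂ and L ≠ 0. Set β₂ = β₁·e^{−α₁}, σ = 1/L, c = (β₂/γ₂)·exp( ((τ−1)/τ)·(L + Log τ + Log(1/L)) ), and μ = (Log τ + Log(1/L))/L − c, where Log denotes the principal branch of the complex logarithm. If v ∈ ℂ satisfies e^{−v} + c·e^{−v/τ} − σv − 1 − c − μ = 0, then s := (L + Log τ + Log(1/L) + v)/τ + α₁ satisfies the two-lag characteristic equation s = α₁ + β₁·e^{−s} + γ₁·e^{−sτ}. -/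
/-!
Put `A := L + Log τ + Log (1/L)`, so that `exp A = γ₂ τ / L`. Substituting `s = (A + v)/τ + α₁`
factors `γ₁ e^{-sτ} = (γ₂ e^{-A}) e^{-v} = (L/τ) e^{-v}` and
`β₁ e^{-s} = (β₂ e^{-A/τ}) e^{-v/τ} = c (L/τ) e^{-v/τ}`, the constant `c` being chosen exactly for
the last identity. The characteristic equation thus becomes `L (e^{-v} + c e^{-v/τ}) = A + v`,
which is the equation for `v` after clearing `σ = 1/L` and `μ`.
-/

open Complex

lemma two_lag_rhs_eq_of_eq_div_add {τ α β γ A v s : ℂ} (hτ : τ ≠ 0)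
    (hs : s = (A + v) / τ + α) :
    β * exp (-s) + γ * exp (-(s * τ)) =
      β * exp (-α) * exp (-A / τ) * exp (-v / τ) + γ * exp (-(α * τ)) * exp (-A) * exp (-v) := by
  have hs₁ : -s = -α + -A / τ + -v / τ := by rw [hs]; ring
  have hsτ : -(s * τ) = -(α * τ) + -A + -v := by rw [hs]; field_simp; ring
  rw [hs₁, hsτ, exp_add, exp_add, exp_add, exp_add]
  ring

lemma mul_exp_neg_add_log_add_log_inv {γ τ L : ℂ} (hL : exp L = γ) (hτ : τ ≠ 0) (hL0 : L ≠ 0) :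
    γ * exp (-(L + log τ + log (1 / L))) = L / τ := by
  subst hL
  rw [exp_neg, exp_add, exp_add, exp_log hτ, exp_log (one_div_ne_zero hL0)]
  field_simp [exp_ne_zero L]

lemma mul_exp_neg_div_eq {β γ τ A : ℂ} (hτ : τ ≠ 0) (hγ : γ ≠ 0) :
    β * exp (-A / τ) = β / γ * exp ((τ - 1) / τ * A) * (γ * exp (-A)) := by
  have hA : (τ - 1) / τ * A = A + -A / τ := by field_simp; ring
  rw [hA, exp_add, exp_neg A]
  field_simp [exp_ne_zero A]

theorem two_lag_root_from_v_general
    (τ : ℝ) (hτ : 0 < τ) (α₁ β₁ γ₁ : ℂ)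
    (γ₂ : ℂ) (hγ₂def : γ₂ = γ₁ * Complex.exp (-(α₁ * τ)))
    (L : ℂ) (hL : Complex.exp L = γ₂) (hL0 : L ≠ 0)
    (β₂ σ c μ : ℂ)
    (hβ₂ : β₂ = β₁ * Complex.exp (-α₁))
    (hσ : σ = 1 / L)
    (hc : c = (β₂ / γ₂) *
      Complex.exp ((((τ : ℂ) - 1) / τ) * (L + Complex.log τ + Complex.log (1 / L))))
    (hμ : μ = (Complex.log τ + Complex.log (1 / L)) / L - c)
    (v : ℂ)
    (hv : Complex.exp (-v) + c * Complex.exp (-v / τ) - σ * v - 1 - c - μ = 0)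
    (s : ℂ)
    (hs : s = (L + Complex.log τ + Complex.log (1 / L) + v) / τ + α₁) :
    s = α₁ + β₁ * Complex.exp (-s) + γ₁ * Complex.exp (-(s * τ)) := by
  have hτ0 : (τ : ℂ) ≠ 0 := by exact_mod_cast hτ.ne'
  set A := L + log τ + log (1 / L)
  have hγ : γ₂ * exp (-A) = L / τ := mul_exp_neg_add_log_add_log_inv hL hτ0 hL0
  have hβ : β₂ * exp (-A / τ) = c * (L / τ) := by
    rw [mul_exp_neg_div_eq hτ0 (hL ▸ exp_ne_zero L), hγ, ← hc]
  have hv' : L * (exp (-v) + c * exp (-v / τ)) = A + v := by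
    have hLL : L * (1 / L) = 1 := mul_one_div_cancel hL0
    rw [hσ, hμ] at hv
    linear_combination L * hv + (v + log τ + log (1 / L)) * hLL
  rw [add_assoc, two_lag_rhs_eq_of_eq_div_add hτ0 hs, ← hβ₂, ← hγ₂def, hβ, hγ, hs]
  linear_combination (-1 / (τ : ℂ)) * hv'

/-- Let `τ > 0`, `γ₂ := γ₁·e^{−α₁τ} ≠ 0`, and `L` a nonzero
branch of the logarithm of `γ₂`. With `β₂ = β₁·e^{−α₁}`, `σ = 1/L`,
`c = (β₂/γ₂)·exp(((τ−1)/τ)·(L + Log τ + Log(1/L)))`, and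
`μ = (Log τ + Log(1/L))/L − c`, if `v` satisfies
`e^{−v} + c·e^{−v/τ} − σv − 1 − c − μ = 0`, then
`s := (L + Log τ + Log(1/L) + v)/τ + α₁` satisfies the two-lag characteristic
equation `s = α₁ + β₁·e^{−s} + γ₁·e^{−sτ}`. -/
theorem two_lag_root_from_v
    (τ : ℝ) (hτ : 0 < τ) (α₁ β₁ γ₁ : ℂ)
    (γ₂ : ℂ) (hγ₂def : γ₂ = γ₁ * Complex.exp (-(α₁ * τ))) (hγ₂ : γ₂ ≠ 0)
    (L : ℂ) (hL : Complex.exp L = γ₂) (hL0 : L ≠ 0)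
    (β₂ σ c μ : ℂ)
    (hβ₂ : β₂ = β₁ * Complex.exp (-α₁))
    (hσ : σ = 1 / L)
    (hc : c = (β₂ / γ₂) *
      Complex.exp ((((τ : ℂ) - 1) / τ) * (L + Complex.log τ + Complex.log (1 / L))))
    (hμ : μ = (Complex.log τ + Complex.log (1 / L)) / L - c)
    (v : ℂ)
    (hv : Complex.exp (-v) + c * Complex.exp (-v / τ) - σ * v - 1 - c - μ = 0)
    (s : ℂ)
    (hs : s = (L + Complex.log τ + Complex.log (1 / L) + v) / τ + α₁) :
    s = α₁ + β₁ * Complex.exp (-s) + γ₁ * Complex.exp (-(s * τ)) :=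
  two_lag_root_from_v_general τ hτ α₁ β₁ γ₁ γ₂ hγ₂def L hL hL0 β₂ σ c μ hβ₂ hσ hc hμ v hv s hs
end

section
/- Let r > 0 and a₁ = a₂ > 0 be real, set x* = 1/(a₁ + a₂) = 1/(2a₁), and suppose τ₁ > 1/(2·x*·r·a₁) = 1/r. Then there exist τ₂ > 0 and ω > 0 such that s = iω is a root of the characteristic equation s + r·x*·a₁·e^{−sτ₁} + r·x*·a₂·e^{−sτ₂} = 0 of the linearized two-lag blowfly model, i.e., iω + (r/2)·(e^{−iωτ₁} + e^{−iωτ₂}) = 0. -/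
/-!
With equal weights both delay terms carry the coefficient `r / 2`. If `ω (τ₁ + τ₂) = π` then
`e^{-iωτ₂} = -e^{iωτ₁}`, so the two exponentials sum to `-2i sin (ωτ₁)` and `iω` is a root
exactly when `r sin (ωτ₁) = ω`. Writing `θ = ωτ₁`, this asks for `sinc θ = 1 / (r τ₁)` with
`θ ∈ (0, π)`, which the intermediate value theorem provides since `sinc` falls from `1` to `0`
on `[0, π]` and `r τ₁ > 1`; then `τ₂ = π / ω - τ₁ > 0`.
-/

open Real Set

theorem Real.exists_mem_Ioo_sin_eq_mul {y : ℝ} (hy : y ∈ Ioo 0 1) :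
    ∃ θ ∈ Ioo 0 π, sin θ = y * θ := by
  have hy' : y ∈ Ioo (sinc π) (sinc 0) := by simpa [sinc_of_ne_zero pi_ne_zero] using hy
  obtain ⟨θ, hθ, hsinc⟩ :=
    intermediate_value_Ioo' pi_pos.le continuous_sinc.continuousOn hy'
  rw [sinc_of_ne_zero hθ.1.ne', div_eq_iff hθ.1.ne'] at hsinc
  exact ⟨θ, hθ, hsinc⟩

theorem Complex.exp_neg_I_mul_add_exp_neg_I_mul_of_add_eq_pi {ω τ₁ τ₂ : ℝ}
    (hsum : ω * (τ₁ + τ₂) = π) :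
    exp (-(I * ω) * τ₁) + exp (-(I * ω) * τ₂) = -2 * I * Real.sin (ω * τ₁) := by
  have hsumℂ : (ω : ℂ) * (τ₁ + τ₂) = π := by exact_mod_cast hsum
  have hτ₁ : -(I * ω) * τ₁ = -(ω * τ₁ : ℂ) * I := by ring
  have hτ₂ : -(I * ω) * τ₂ = (ω * τ₁ : ℂ) * I - π * I := by
    linear_combination (-I) * hsumℂ
  rw [hτ₁, hτ₂, exp_sub, exp_pi_mul_I, ofReal_sin, ofReal_mul]
  linear_combination I * two_sin (ω * τ₁) +
    (exp (-(ω * τ₁ : ℂ) * I) - exp ((ω * τ₁ : ℂ) * I)) * I_sq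

theorem Complex.I_mul_add_half_mul_exp_add_half_mul_exp_eq_zero {r ω τ₁ τ₂ : ℝ}
    (hsin : r * Real.sin (ω * τ₁) = ω) (hsum : ω * (τ₁ + τ₂) = π) :
    I * ω + (r / 2 : ℝ) * exp (-(I * ω) * τ₁) + (r / 2 : ℝ) * exp (-(I * ω) * τ₂) = 0 := by
  have hsinℂ : (r : ℂ) * Real.sin (ω * τ₁) = ω := by exact_mod_cast hsin
  rw [add_assoc, ← mul_add, exp_neg_I_mul_add_exp_neg_I_mul_of_add_eq_pi hsum]
  push_cast at hsinℂ ⊢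
  linear_combination (-I) * hsinℂ

/-- For the linearized two-lag blowfly model with `r > 0`,
`a₁ = a₂ > 0`, `x* = 1/(a₁ + a₂)`, and `τ₁ > 1/(2·x*·r·a₁)`, there exist
`τ₂ > 0` and `ω > 0` such that `s = iω` is a root of the characteristic
equation `s + r·x*·a₁·e^{−sτ₁} + r·x*·a₂·e^{−sτ₂} = 0`. -/
theorem blowfly_imaginary_root_exists
    (r a₁ a₂ xstar τ₁ : ℝ) (hr : 0 < r) (ha₁ : 0 < a₁) (ha : a₁ = a₂)
    (hx : xstar = 1 / (a₁ + a₂)) (hτ₁ : τ₁ > 1 / (2 * xstar * r * a₁)) :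
    ∃ τ₂ > (0 : ℝ), ∃ ω > (0 : ℝ),
      Complex.I * ω +
        (r * xstar * a₁ : ℝ) * Complex.exp (-(Complex.I * ω) * τ₁) +
        (r * xstar * a₂ : ℝ) * Complex.exp (-(Complex.I * ω) * τ₂) = 0 := by
  have hcoef₁ : r * xstar * a₁ = r / 2 := by
    subst hx ha
    field_simp
    norm_num
  have hcoef₂ : r * xstar * a₂ = r / 2 := ha ▸ hcoef₁
  have hrτ₁ : 1 < r * τ₁ := by
    rw [show 2 * xstar * r * a₁ = r by linarith, gt_iff_lt, div_lt_iff₀ hr] at hτ₁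
    linarith
  have hτ₁pos : 0 < τ₁ := pos_of_mul_pos_right (one_pos.trans hrτ₁) hr.le
  obtain ⟨θ, ⟨hθ, hθπ⟩, hsin⟩ :=
    exists_mem_Ioo_sin_eq_mul ⟨inv_pos.mpr (one_pos.trans hrτ₁), inv_lt_one_of_one_lt₀ hrτ₁⟩
  refine ⟨τ₁ * (π - θ) / θ, by have := sub_pos.mpr hθπ; positivity, θ / τ₁, by positivity, ?_⟩
  rw [hcoef₁, hcoef₂]
  apply Complex.I_mul_add_half_mul_exp_add_half_mul_exp_eq_zero
  · rw [div_mul_cancel₀ θ hτ₁pos.ne', hsin]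
    field_simp
  · field_simp
    ring
end
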